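/- Let D be a Mori domain, i.e., D satisfies the ascending chain condition on integral divisorial ideals (equivalently, for every nonzero integral ideal I there is a finitely generated ideal J ⊆ I with J^v = I^v). Then D is completely integrally closed if and only if D is a v-domain. -/

import Mathlib

open FractionalIdeal

variable {D K : Type*} [CommRing D] [IsDomain D] [Field K] [Algebra D K] [IsFractionRing D K]

/-- The `v`-operation: `A ↦ (A⁻¹)⁻¹`, where `A⁻¹ = (D : A) = 1 / A`. -/
noncomputable def vop (A : FractionalIdeal (nonZeroDivisors D) K) :
    FractionalIdeal (nonZeroDivisors D) K := 1 / (1 / A)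

/-- `A` is `v`-invertible if `(A·A⁻¹)^v = D`. -/
noncomputable def IsVInvertible (A : FractionalIdeal (nonZeroDivisors D) K) : Prop :=
  vop (A * (1 / A)) = 1

/-!
If `D` is completely integrally closed and `F ≠ 0`, every `x ∈ (F F⁻¹)⁻¹` satisfies
`x F⁻¹ ⊆ F⁻¹`, so `x` is almost integral, hence in `D`; thus `(F F⁻¹)⁻¹ = D` and `(F F⁻¹)^v = D`.

Conversely, an almost integral `z` stabilizes the nonzero ideal `I` spanned by the integers
`a z ^ n`. The Mori property gives a finitely generated `J ⊆ I` with `J^v = I^v`, so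
`z J ⊆ I ⊆ J^v` and `z J J⁻¹ ⊆ J^v J⁻¹ ⊆ D`. Thus `z ∈ (J J⁻¹)⁻¹`, which is `D` because `J` is
`v`-invertible.
-/

namespace FractionalIdeal

instance : NoZeroDivisors (FractionalIdeal (nonZeroDivisors D) K) where
  eq_zero_or_eq_zero_of_mul_eq_zero {A B} h := by
    by_contra! hAB
    obtain ⟨a, ha0, ha⟩ := exists_ne_zero_mem_isInteger hAB.1
    obtain ⟨b, hb0, hb⟩ := exists_ne_zero_mem_isInteger hAB.2
    have hab := mul_mem_mul ha hb
    rw [h, mem_zero_iff, ← map_mul, IsFractionRing.to_map_eq_zero_iff] at hab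
    exact mul_ne_zero ha0 hb0 hab

theorem one_div_ne_zero_of_ne_zero {A : FractionalIdeal (nonZeroDivisors D) K} (hA : A ≠ 0) :
    1 / A ≠ 0 := by
  have hden : spanSingleton _ (algebraMap D K A.den) ≤ 1 / A := by
    rw [le_div_iff_mul_le hA, den_mul_self_eq_num']
    exact coeIdeal_le_one
  intro h
  rw [h, le_zero_iff, spanSingleton_eq_zero_iff] at hden
  exact IsFractionRing.to_map_ne_zero_of_mem_nonZeroDivisors A.den.2 hden

end FractionalIdeal

section VOperation

variable {A B : FractionalIdeal (nonZeroDivisors D) K}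

@[simp]
theorem vop_zero : vop (0 : FractionalIdeal (nonZeroDivisors D) K) = 0 := by
  simp [vop]

theorem le_vop (A : FractionalIdeal (nonZeroDivisors D) K) : A ≤ vop A := by
  rcases eq_or_ne A 0 with rfl | hA
  · simp
  rw [vop, le_div_iff_mul_le (one_div_ne_zero_of_ne_zero hA)]
  exact mul_one_div_le_one

theorem vop_eq_zero_iff : vop A = 0 ↔ A = 0 :=
  ⟨fun h ↦ FractionalIdeal.le_zero_iff.mp (h ▸ le_vop A), fun h ↦ h ▸ vop_zero⟩

theorem vop_mul_one_div_le_one (A : FractionalIdeal (nonZeroDivisors D) K) :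
    vop A * (1 / A) ≤ 1 :=
  mul_comm (1 / A) _ ▸ mul_one_div_le_one

theorem vop_eq_one_iff : vop B = 1 ↔ 1 / B = 1 := by
  refine ⟨fun h ↦ le_antisymm ?_ ?_, fun h ↦ by rw [vop, h, FractionalIdeal.div_one]⟩
  · have := le_vop (1 / B)
    rwa [show vop (1 / B) = 1 / vop B from rfl, h, FractionalIdeal.div_one] at this
  · have hB : B ≠ 0 := by
      rintro rfl
      simp at h
    rw [le_div_iff_mul_le hB, one_mul, ← h]
    exact le_vop B

theorem mem_one_of_spanSingleton_mul_le_vop {z : K} (hB : IsVInvertible B)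
    (hz : spanSingleton _ z * B ≤ vop B) : z ∈ (1 : FractionalIdeal (nonZeroDivisors D) K) := by
  rw [IsVInvertible, vop_eq_one_iff] at hB
  have hB0 : B * (1 / B) ≠ 0 := fun h ↦ by simp [h] at hB
  rw [← spanSingleton_le_iff_mem, ← hB, le_div_iff_mul_le hB0, ← mul_assoc]
  exact (mul_le_mul_left hz _).trans (vop_mul_one_div_le_one B)

theorem spanSingleton_mul_le_vop_of_le {z : K} (hBA : B ≤ A) (hv : vop B = vop A)
    (hzA : spanSingleton _ z * A ≤ A) : spanSingleton _ z * B ≤ vop B :=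
  calc spanSingleton _ z * B
      ≤ spanSingleton _ z * A := mul_le_mul_right hBA _
    _ ≤ A := hzA
    _ ≤ vop B := hv ▸ le_vop A

theorem spanSingleton_mul_one_div_le_one_div {x : K} (hx : x ∈ 1 / (A * (1 / A))) :
    spanSingleton _ x * (1 / A) ≤ 1 / A := by
  rcases eq_or_ne A 0 with rfl | hA
  · simp
  rw [le_div_iff_mul_le hA, mul_assoc, mul_comm (1 / A)]
  calc spanSingleton _ x * (A * (1 / A))
      ≤ 1 / (A * (1 / A)) * (A * (1 / A)) := mul_le_mul_left (spanSingleton_le_iff_mem.mpr hx) _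
    _ ≤ 1 := mul_comm (A * (1 / A)) _ ▸ mul_one_div_le_one

theorem one_le_one_div_mul_one_div (hA : A ≠ 0) : 1 ≤ 1 / (A * (1 / A)) := by
  rw [le_div_iff_mul_le (mul_ne_zero hA (one_div_ne_zero_of_ne_zero hA)), one_mul]
  exact mul_one_div_le_one

end VOperation

theorem isAlmostIntegral_iff_exists_ne_zero {R S : Type*} [CommRing R] [IsDomain R]
    [CommRing S] [Algebra R S] {s : S} : IsAlmostIntegral R s ↔
      ∃ a : R, a ≠ 0 ∧ ∀ n : ℕ, ∃ d : R, algebraMap R S a * s ^ n = algebraMap R S d := by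
  simp only [IsAlmostIntegral, mem_nonZeroDivisors_iff_ne_zero, Algebra.smul_def,
    RingHom.mem_range, eq_comm (b := algebraMap R S _ * _)]

section AlmostIntegral

variable {z : K}

theorem isAlmostIntegral_of_spanSingleton_mul_le {A : FractionalIdeal (nonZeroDivisors D) K}
    (hA : A ≠ 0) (hzA : spanSingleton _ z * A ≤ A) : IsAlmostIntegral D z := by
  obtain ⟨b, hb0, hb⟩ := exists_ne_zero_mem_isInteger hA
  have hpow : ∀ n : ℕ, z ^ n * algebraMap D K b ∈ A := by
    intro n
    induction n with
    | zero => simpa using hb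
    | succ n ih => simpa [pow_succ', mul_assoc] using spanSingleton_mul_le_iff.mp hzA _ ih
  refine ⟨A.den * b, mul_mem A.den.2 (mem_nonZeroDivisors_of_ne_zero hb0), fun n ↦ ?_⟩
  have hnum : algebraMap D K A.den * (z ^ n * algebraMap D K b) ∈
      (A.num : FractionalIdeal (nonZeroDivisors D) K) :=
    den_mul_self_eq_num' _ K A ▸ mul_mem_mul (mem_spanSingleton_self _ _) (hpow n)
  obtain ⟨d, -, hd⟩ := (mem_coeIdeal _).mp hnum
  exact ⟨d, by rw [hd, Algebra.smul_def, map_mul]; ring⟩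

theorem IsAlmostIntegral.exists_ideal_spanSingleton_mul_le (hz : IsAlmostIntegral D z) :
    ∃ I : Ideal D, I ≠ ⊥ ∧
      spanSingleton (nonZeroDivisors D) z * (I : FractionalIdeal (nonZeroDivisors D) K) ≤ I := by
  obtain ⟨a, ha0, hf⟩ := isAlmostIntegral_iff_exists_ne_zero.mp hz
  choose f hf using hf
  have hshift (n : ℕ) : z * algebraMap D K (f n) = algebraMap D K (f (n + 1)) := by
    rw [← hf, ← hf, pow_succ]
    ring
  set I := Ideal.span (Set.range f)
  have hf0 : f 0 = a := IsFractionRing.injective D K (by simpa using (hf 0).symm)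
  refine ⟨I, fun hI ↦ ha0 ?_, spanSingleton_mul_le_iff.mpr ?_⟩
  · rw [← hf0, ← Ideal.mem_bot, ← hI]
    exact Ideal.subset_span ⟨0, rfl⟩
  suffices hI : I ≤ ((I : FractionalIdeal (nonZeroDivisors D) K) : Submodule D K).comap
      (LinearMap.mulLeft D z ∘ₗ Algebra.linearMap D K) by
    rintro _ ⟨w, hw, rfl⟩
    exact hI hw
  rw [Ideal.span_le]
  rintro _ ⟨n, rfl⟩
  exact ⟨f (n + 1), Ideal.subset_span ⟨n + 1, rfl⟩, (hshift n).symm⟩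

end AlmostIntegral

/-- In a Mori domain, completely integrally closed is equivalent to being a `v`-domain. -/
theorem mori_cic_iff_vDomain
    (hMori : ∀ I : Ideal D, I ≠ ⊥ → ∃ J : Ideal D, J.FG ∧ J ≤ I ∧
      vop ((J : Ideal D) : FractionalIdeal (nonZeroDivisors D) K) =
        vop ((I : Ideal D) : FractionalIdeal (nonZeroDivisors D) K)) :
    (∀ z : K, (∃ a : D, a ≠ 0 ∧ ∀ n : ℕ, ∃ d : D,
        algebraMap D K a * z ^ n = algebraMap D K d) → ∃ d : D, algebraMap D K d = z) ↔
      (∀ F : FractionalIdeal (nonZeroDivisors D) K, F ≠ 0 → (F : Submodule D K).FG →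
        IsVInvertible F) := by
  simp only [← isAlmostIntegral_iff_exists_ne_zero]
  constructor
  · intro hCIC F hF _
    rw [IsVInvertible, vop_eq_one_iff]
    refine le_antisymm (fun x hx ↦ ?_) (one_le_one_div_mul_one_div hF)
    obtain ⟨d, rfl⟩ := hCIC x <| isAlmostIntegral_of_spanSingleton_mul_le
      (one_div_ne_zero_of_ne_zero hF) (spanSingleton_mul_one_div_le_one_div hx)
    exact coe_mem_one _ d
  · intro hV z hz
    obtain ⟨I, hI, hzI⟩ := hz.exists_ideal_spanSingleton_mul_le
    obtain ⟨J, hJ, hJI, hJv⟩ := hMori I hI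
    have hJ0 : (J : FractionalIdeal (nonZeroDivisors D) K) ≠ 0 := by
      rw [Ne, ← vop_eq_zero_iff, hJv, vop_eq_zero_iff, coeIdeal_eq_zero]
      exact hI
    have hJfg : (J : FractionalIdeal (nonZeroDivisors D) K).coeToSubmodule.FG := by
      rw [coe_coeIdeal]
      exact Submodule.FG.map _ hJ
    refine (mem_one_iff _).mp (mem_one_of_spanSingleton_mul_le_vop (hV _ hJ0 hJfg) ?_)
    exact spanSingleton_mul_le_vop_of_le ((coeIdeal_le_coeIdeal K).mpr hJI) hJv hzI
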